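/- For m, L > 0 and σ > −m·tanh(mL/2), the quantity D(σ) = (1/2)[ log( 4m² / ( (σ+m)² − e^{−2mL}(σ−m)² ) ) + σ/m − 1 ] is nonnegative, vanishes if and only if σ = m, and tends to +∞ as σ → +∞ and as σ → (−m·tanh(mL/2))⁺. -/

import Mathlib

/-!
Write `Q(σ) = (σ + m)² - e^{-2mL} (σ - m)²` and `x = (σ + m) / (2m)`. Then
`D(σ) = ½ log ((σ + m)² / Q(σ)) + (x - 1 - log x)`.
With `E = e^{-mL}`, `Q(σ) = (σ(1 - E) + m(1 + E)) (σ(1 + E) + m(1 - E))`, and since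
`tanh (mL/2) = (1 - E) / (1 + E)` the second factor vanishes exactly at the left endpoint
`σ₀ = -m tanh (mL/2)`. For `σ > σ₀` both factors are positive and `Q(σ) ≤ (σ + m)²`, so the first
term of `D` is nonnegative, while `x - 1 - log x ≥ 0` with equality only at `x = 1`, i.e. `σ = m`,
and grows without bound as `σ → ∞`. As `σ ↓ σ₀`, `Q(σ) ↓ 0` and `log (4m² / Q(σ))` blows up.
-/

open Real Filter

/-- The relative entropy between the free-boundary field of mass `m` on `(0,L)` and the
Robin field with boundary parameter `σ`. -/
noncomputable def robinRelEntropy (m L σ : ℝ) : ℝ :=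
  (1 / 2) * (Real.log (4 * m ^ 2 /
      ((σ + m) ^ 2 - Real.exp (-2 * m * L) * (σ - m) ^ 2)) + σ / m - 1)

open Topology Set

theorem Real.tanh_half_eq (x : ℝ) : tanh (x / 2) = (1 - exp (-x)) / (1 + exp (-x)) := by
  have hx : exp (-x) = exp (-(x / 2)) * exp (-(x / 2)) := by rw [← exp_add]; ring_nf
  rw [tanh_eq, hx, ← mul_div_mul_right _ _ (exp_pos (-(x / 2))).ne', sub_mul, add_mul,
    ← exp_add, add_neg_cancel, exp_zero]

theorem Real.tendsto_sub_log_atTop : Tendsto (fun x ↦ x - log x) atTop atTop := by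
  refine tendsto_atTop_mono' atTop ?_
    (tendsto_atTop_add_const_right _ (1 - log 2) (tendsto_id.atTop_div_const two_pos))
  filter_upwards [eventually_gt_atTop 0] with x hx
  have := log_le_sub_one_of_pos (half_pos hx)
  rw [log_div hx.ne' two_ne_zero] at this
  rw [id]
  linarith

noncomputable def robinDenom (m L σ : ℝ) : ℝ := (σ + m) ^ 2 - exp (-2 * m * L) * (σ - m) ^ 2

theorem robinRelEntropy_eq_robinDenom (m L σ : ℝ) :
    robinRelEntropy m L σ = 1 / 2 * (log (4 * m ^ 2 / robinDenom m L σ) + σ / m - 1) := rfl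

theorem robinDenom_eq_mul (m L σ : ℝ) :
    robinDenom m L σ = (σ * (1 - exp (-(m * L))) + m * (1 + exp (-(m * L)))) *
      (σ * (1 + exp (-(m * L))) + m * (1 - exp (-(m * L)))) := by
  have hE : exp (-2 * m * L) = exp (-(m * L)) ^ 2 := by rw [← exp_nat_mul]; ring_nf
  rw [robinDenom, hE]
  ring

theorem robinDenom_le (m L σ : ℝ) : robinDenom m L σ ≤ (σ + m) ^ 2 := by
  have : 0 ≤ exp (-2 * m * L) * (σ - m) ^ 2 := by positivity
  rw [robinDenom]
  linarith

theorem robinDenom_self (m L : ℝ) : robinDenom m L m = 4 * m ^ 2 := by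
  rw [robinDenom]; ring

theorem robinDenom_neg_mul_tanh (m L : ℝ) : robinDenom m L (-m * tanh (m * L / 2)) = 0 := by
  rw [robinDenom_eq_mul, tanh_half_eq]
  have : 0 < 1 + exp (-(m * L)) := by positivity
  field_simp
  ring

theorem neg_lt_neg_mul_tanh {m : ℝ} (hm : 0 < m) (x : ℝ) : -m < -m * tanh x := by
  nlinarith [tanh_lt_one x]

theorem robinDenom_pos {m L σ : ℝ} (hm : 0 < m) (hL : 0 ≤ L)
    (hσ : -m * tanh (m * L / 2) < σ) : 0 < robinDenom m L σ := by
  have hσm : -m < σ := (neg_lt_neg_mul_tanh hm _).trans hσ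
  rw [tanh_half_eq] at hσ
  rw [robinDenom_eq_mul]
  set E := exp (-(m * L))
  have hE0 : 0 < E := exp_pos _
  have hE1 : E ≤ 1 := exp_le_one_iff.2 (by simpa using mul_nonneg hm.le hL)
  have hright : -m * (1 - E) < σ * (1 + E) := by
    rwa [mul_div_assoc', div_lt_iff₀ (by positivity)] at hσ
  apply mul_pos <;> nlinarith

theorem robinRelEntropy_eq_add {m L σ : ℝ} (hm : 0 < m) (hσ : -m < σ)
    (hQ : 0 < robinDenom m L σ) :
    robinRelEntropy m L σ = log ((σ + m) ^ 2 / robinDenom m L σ) / 2 +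
      ((σ + m) / (2 * m) - 1 - log ((σ + m) / (2 * m))) := by
  have ha : 0 < σ + m := by linarith
  have h4 : 4 * m ^ 2 = (2 * m) ^ 2 := by ring
  have hσ' : σ / m - 1 = 2 * ((σ + m) / (2 * m) - 1) := by field_simp; ring
  rw [robinRelEntropy_eq_robinDenom, add_sub_assoc, hσ', h4, log_div (by positivity) hQ.ne',
    log_div (by positivity) hQ.ne', log_div ha.ne' (by positivity), log_pow, log_pow]
  push_cast
  ring

theorem le_robinRelEntropy {m L σ : ℝ} (hm : 0 < m) (hL : 0 ≤ L)
    (hσ : -m * tanh (m * L / 2) < σ) :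
    (σ + m) / (2 * m) - log ((σ + m) / (2 * m)) - 1 ≤ robinRelEntropy m L σ := by
  have hσm : -m < σ := (neg_lt_neg_mul_tanh hm _).trans hσ
  have hQ := robinDenom_pos hm hL hσ
  have : 0 ≤ log ((σ + m) ^ 2 / robinDenom m L σ) :=
    log_nonneg ((one_le_div hQ).2 (robinDenom_le m L σ))
  rw [robinRelEntropy_eq_add hm hσm hQ]
  linarith

theorem robinRelEntropy_pos {m L σ : ℝ} (hm : 0 < m) (hL : 0 ≤ L)
    (hσ : -m * tanh (m * L / 2) < σ) (hne : σ ≠ m) : 0 < robinRelEntropy m L σ := by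
  have hσm : -m < σ := (neg_lt_neg_mul_tanh hm _).trans hσ
  have hx : 0 < (σ + m) / (2 * m) := div_pos (by linarith) (by positivity)
  have hx1 : (σ + m) / (2 * m) ≠ 1 := by
    rw [Ne, div_eq_one_iff_eq (by positivity)]
    contrapose! hne
    linarith
  linarith [log_lt_sub_one_of_pos hx hx1, le_robinRelEntropy hm hL hσ]

theorem robinRelEntropy_self {m : ℝ} (hm : m ≠ 0) (L : ℝ) : robinRelEntropy m L m = 0 := by
  rw [robinRelEntropy_eq_robinDenom, robinDenom_self, div_self (by positivity), log_one,
    div_self hm]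
  norm_num

theorem tendsto_robinRelEntropy_atTop {m L : ℝ} (hm : 0 < m) (hL : 0 ≤ L) :
    Tendsto (robinRelEntropy m L) atTop atTop := by
  have hx : Tendsto (fun σ ↦ (σ + m) / (2 * m)) atTop atTop :=
    (tendsto_atTop_add_const_right _ m tendsto_id).atTop_div_const (by positivity)
  refine tendsto_atTop_mono' atTop ?_
    (tendsto_atTop_add_const_right _ (-1) (tendsto_sub_log_atTop.comp hx))
  filter_upwards [eventually_gt_atTop (-m * tanh (m * L / 2))] with σ hσ
  simpa only [Function.comp_apply, ← sub_eq_add_neg] using le_robinRelEntropy hm hL hσ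

theorem tendsto_robinRelEntropy_nhdsGT {m L : ℝ} (hm : 0 < m) (hL : 0 ≤ L) :
    Tendsto (robinRelEntropy m L) (𝓝[>] (-m * tanh (m * L / 2))) atTop := by
  set t := -m * tanh (m * L / 2)
  have hQcont : Continuous (robinDenom m L) := by unfold robinDenom; fun_prop
  have hQ : Tendsto (robinDenom m L) (𝓝[>] t) (𝓝[>] 0) := by
    refine tendsto_nhdsWithin_of_tendsto_nhds_of_eventually_within _ ?_ ?_
    · simpa only [t, robinDenom_neg_mul_tanh] using
        (hQcont.tendsto t).mono_left (nhdsWithin_le_nhds (s := Ioi t))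
    · filter_upwards [self_mem_nhdsWithin] with σ hσ using robinDenom_pos hm hL hσ
  have hlog : Tendsto (fun σ ↦ log (4 * m ^ 2 / robinDenom m L σ)) (𝓝[>] t) atTop :=
    tendsto_log_atTop.comp (by simpa only [div_eq_mul_inv, Pi.inv_apply] using
      hQ.inv_tendsto_nhdsGT_zero.const_mul_atTop (by positivity : 0 < 4 * m ^ 2))
  have hlin : Tendsto (fun σ ↦ σ / m - 1) (𝓝[>] t) (𝓝 (t / m - 1)) :=
    (by fun_prop : Continuous fun σ ↦ σ / m - 1).continuousWithinAt.tendsto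
  exact ((hlog.atTop_add hlin).const_mul_atTop one_half_pos).congr fun σ ↦ by
    rw [robinRelEntropy_eq_robinDenom, add_sub_assoc]

/-- `D(σ)` is nonnegative on `σ > -m tanh(mL/2)`, vanishes iff `σ = m`, tends to `+∞`
as `σ → +∞`, and tends to `+∞` as `σ → (-m tanh(mL/2))⁺`. -/
theorem robinRelEntropy_properties (m L : ℝ) (hm : 0 < m) (hL : 0 < L) :
    (∀ σ : ℝ, -m * Real.tanh (m * L / 2) < σ →
        0 ≤ robinRelEntropy m L σ ∧ (robinRelEntropy m L σ = 0 ↔ σ = m)) ∧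
      Tendsto (robinRelEntropy m L) atTop atTop ∧
      Tendsto (robinRelEntropy m L)
        (nhdsWithin (-m * Real.tanh (m * L / 2))
          (Set.Ioi (-m * Real.tanh (m * L / 2)))) atTop := by
  refine ⟨fun σ hσ ↦ ?_, tendsto_robinRelEntropy_atTop hm hL.le,
    tendsto_robinRelEntropy_nhdsGT hm hL.le⟩
  rcases eq_or_ne σ m with rfl | hne
  · simp [robinRelEntropy_self hm.ne']
  · have hpos := robinRelEntropy_pos hm hL.le hσ hne
    exact ⟨hpos.le, iff_of_false hpos.ne' hne⟩
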